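/- Let H and H̃ be d×d symmetric positive definite matrices with (1−η)·H ⪯ H̃ for some η ∈ (0,1), let g ∈ ℝ^d, p̃ := H̃⁻¹g, and p⋆ := H⁻¹g. If p′ ∈ ℝ^d satisfies ‖H̃^{1/2}(p′ − p̃)‖₂ ≤ ε₀·‖H̃^{1/2} p̃‖₂ for some ε₀ ∈ (0,1), then ‖H^{1/2}(p′ − p̃)‖₂ ≤ (ε₀/(1−η))·‖H^{1/2} p⋆‖₂. -/

import Mathlib

/-! Write `‖x‖_M := ‖M^{1/2} x‖`, so that `‖x‖_M² = ⟪x, M x⟫`, and `(1 - η) H ⪯ H̃` reads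
`(1 - η) ‖x‖_H² ≤ ‖x‖_H̃²`. Since `H̃ p̃ = g = H p⋆`, Cauchy–Schwarz in the `H`-inner product gives
`‖p̃‖_H̃² = ⟪p̃, H p⋆⟫ ≤ ‖p̃‖_H ‖p⋆‖_H ≤ (1 - η)^{-1/2} ‖p̃‖_H̃ ‖p⋆‖_H`, i.e.
`(1 - η) ‖p̃‖_H̃² ≤ ‖p⋆‖_H²`. Hence
`(1 - η)² ‖p' - p̃‖_H² ≤ (1 - η) ‖p' - p̃‖_H̃² ≤ (1 - η) ε₀² ‖p̃‖_H̃² ≤ ε₀² ‖p⋆‖_H²`. -/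

open Matrix

namespace Matrix.PosSemidef

/-- The square root of a positive semidefinite matrix, as defined in Mathlib of December 2024
(removed since). -/
noncomputable def sqrt {n : Type*} [Fintype n] [DecidableEq n] {𝕜 : Type*} [RCLike 𝕜]
    [PartialOrder 𝕜] [StarOrderedRing 𝕜]
    {A : Matrix n n 𝕜} (hA : A.PosSemidef) : Matrix n n 𝕜 :=
  hA.1.eigenvectorUnitary.1 * diagonal ((↑) ∘ (√·) ∘ hA.1.eigenvalues) *
    (star hA.1.eigenvectorUnitary : Matrix n n 𝕜)

end Matrix.PosSemidef

open scoped ComplexOrder InnerProductSpace MatrixOrder RealInnerProductSpace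

theorem mul_norm_sq_le_of_norm_sq_eq_inner {F : Type*} [NormedAddCommGroup F]
    [InnerProductSpace ℝ F] {u v w : F} {c : ℝ} (hw : ‖w‖ ^ 2 = ⟪u, v⟫)
    (hu : c * ‖u‖ ^ 2 ≤ ‖w‖ ^ 2) : c * ‖w‖ ^ 2 ≤ ‖v‖ ^ 2 := by
  rcases le_or_gt c 0 with hc | hc
  · nlinarith [sq_nonneg ‖w‖, sq_nonneg ‖v‖]
  rcases (sq_nonneg ‖w‖).eq_or_lt with hw0 | hw0
  · rw [← hw0, mul_zero]
    positivity
  refine le_of_mul_le_mul_left ?_ hw0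
  calc ‖w‖ ^ 2 * (c * ‖w‖ ^ 2) = c * (‖w‖ ^ 2) ^ 2 := by ring
    _ ≤ c * (‖u‖ * ‖v‖) ^ 2 := by
        gcongr
        exact hw ▸ real_inner_le_norm u v
    _ = (c * ‖u‖ ^ 2) * ‖v‖ ^ 2 := by ring
    _ ≤ ‖w‖ ^ 2 * ‖v‖ ^ 2 := by gcongr

namespace Matrix

variable {n : Type*} [Fintype n] [DecidableEq n]

section RCLike

variable {𝕜 : Type*} [RCLike 𝕜]

theorem toEuclideanCLM_apply_inv_apply {A : Matrix n n 𝕜} (hA : IsUnit A.det)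
    (x : EuclideanSpace 𝕜 n) :
    toEuclideanCLM (𝕜 := 𝕜) A (toEuclideanCLM (𝕜 := 𝕜) A⁻¹ x) = x := by
  rw [← mul_apply_eq_comp, ← map_mul, mul_nonsing_inv _ hA, map_one, one_apply_eq_self]

namespace PosSemidef

variable {A : Matrix n n 𝕜}

theorem sqrt_eq_cfc (hA : A.PosSemidef) : hA.sqrt = cfc Real.sqrt A := by
  rw [hA.1.cfc_eq, IsHermitian.cfc, Unitary.conjStarAlgAut_apply]
  rfl

theorem isSelfAdjoint_sqrt (hA : A.PosSemidef) : IsSelfAdjoint hA.sqrt :=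
  hA.sqrt_eq_cfc ▸ cfc_predicate _ _

theorem sqrt_mul_self (hA : A.PosSemidef) : hA.sqrt * hA.sqrt = A := by
  have hspec : ∀ x ∈ spectrum ℝ A, 0 ≤ x := by
    intro x hx
    rw [hA.1.spectrum_real_eq_range_eigenvalues] at hx
    obtain ⟨i, rfl⟩ := hx
    exact hA.eigenvalues_nonneg i
  rw [sqrt_eq_cfc, ← cfc_mul ..]
  exact (cfc_congr fun x hx => Real.mul_self_sqrt (hspec x hx)).trans (cfc_id' ℝ A hA.1)

theorem inner_toEuclideanCLM_sqrt (hA : A.PosSemidef) (x y : EuclideanSpace 𝕜 n) :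
    ⟪toEuclideanCLM (𝕜 := 𝕜) hA.sqrt x, toEuclideanCLM (𝕜 := 𝕜) hA.sqrt y⟫_𝕜 =
      ⟪x, toEuclideanCLM (𝕜 := 𝕜) A y⟫_𝕜 := by
  set S := toEuclideanCLM (𝕜 := 𝕜) hA.sqrt
  calc ⟪S x, S y⟫_𝕜 = ⟪x, (star S * S) y⟫_𝕜 := by
        rw [ContinuousLinearMap.star_eq_adjoint, mul_apply_eq_comp,
          ContinuousLinearMap.adjoint_inner_right]
    _ = ⟪x, toEuclideanCLM (𝕜 := 𝕜) A y⟫_𝕜 := by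
        rw [← map_star, ← map_mul, hA.isSelfAdjoint_sqrt.star_eq, hA.sqrt_mul_self]

end PosSemidef

end RCLike

section Real

theorem inner_toEuclideanCLM_le_of_le {A B : Matrix n n ℝ} (h : A ≤ B) (x : EuclideanSpace ℝ n) :
    ⟪x, toEuclideanCLM (𝕜 := ℝ) A x⟫ ≤ ⟪x, toEuclideanCLM (𝕜 := ℝ) B x⟫ := by
  have := (le_iff.mp h).dotProduct_mulVec_nonneg (WithLp.ofLp x)
  rw [inner_toEuclideanCLM, inner_toEuclideanCLM, ← sub_nonneg, ← dotProduct_sub, ← sub_mulVec]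
  simpa using this

namespace PosSemidef

variable {A B : Matrix n n ℝ}

theorem norm_toEuclideanCLM_sqrt_sq (hA : A.PosSemidef) (x : EuclideanSpace ℝ n) :
    ‖toEuclideanCLM (𝕜 := ℝ) hA.sqrt x‖ ^ 2 = ⟪x, toEuclideanCLM (𝕜 := ℝ) A x⟫ := by
  rw [← hA.inner_toEuclideanCLM_sqrt, real_inner_self_eq_norm_sq]

theorem mul_norm_toEuclideanCLM_sqrt_sq_le (hA : A.PosSemidef) (hB : B.PosSemidef) {c : ℝ}
    (hAB : c • A ≤ B) (x : EuclideanSpace ℝ n) :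
    c * ‖toEuclideanCLM (𝕜 := ℝ) hA.sqrt x‖ ^ 2 ≤ ‖toEuclideanCLM (𝕜 := ℝ) hB.sqrt x‖ ^ 2 := by
  have := inner_toEuclideanCLM_le_of_le hAB x
  rwa [map_smul, _root_.smul_apply, real_inner_smul_right,
    ← hA.norm_toEuclideanCLM_sqrt_sq, ← hB.norm_toEuclideanCLM_sqrt_sq] at this

theorem mul_norm_toEuclideanCLM_sqrt_sq_le_of_apply_eq (hA : A.PosSemidef) (hB : B.PosSemidef)
    {c : ℝ} (hAB : c • A ≤ B) {p q : EuclideanSpace ℝ n}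
    (hpq : toEuclideanCLM (𝕜 := ℝ) B p = toEuclideanCLM (𝕜 := ℝ) A q) :
    c * ‖toEuclideanCLM (𝕜 := ℝ) hB.sqrt p‖ ^ 2 ≤ ‖toEuclideanCLM (𝕜 := ℝ) hA.sqrt q‖ ^ 2 :=
  mul_norm_sq_le_of_norm_sq_eq_inner
    (by rw [hB.norm_toEuclideanCLM_sqrt_sq, hpq, hA.inner_toEuclideanCLM_sqrt])
    (hA.mul_norm_toEuclideanCLM_sqrt_sq_le hB hAB p)

end PosSemidef

end Real

end Matrix

/-- **Effect of inexactness measured in the true metric.**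
Let `H, H̃` be positive definite with `(1−η)H ⪯ H̃` for `η ∈ (0,1)`, `p̃ = H̃⁻¹g`,
`p⋆ = H⁻¹g`. If `‖H̃^{1/2}(p′ − p̃)‖₂ ≤ ε₀‖H̃^{1/2}p̃‖₂` with `ε₀ ∈ (0,1)`, then
`‖H^{1/2}(p′ − p̃)‖₂ ≤ (ε₀/(1−η))‖H^{1/2}p⋆‖₂`. -/
theorem inexact_direction_true_metric
    (d : ℕ) (H Htilde : Matrix (Fin d) (Fin d) ℝ)
    (hH : H.PosDef) (hHt : Htilde.PosDef)
    (η : ℝ) (hη : η ∈ Set.Ioo (0 : ℝ) 1)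
    (hlower : (Htilde - (1 - η) • H).PosSemidef)
    (g ptilde pstar p' : EuclideanSpace ℝ (Fin d))
    (hptilde : ptilde = Matrix.toEuclideanCLM (𝕜 := ℝ) Htilde⁻¹ g)
    (hpstar : pstar = Matrix.toEuclideanCLM (𝕜 := ℝ) H⁻¹ g)
    (ε₀ : ℝ) (hε₀ : ε₀ ∈ Set.Ioo (0 : ℝ) 1)
    (hinexact : ‖Matrix.toEuclideanCLM (𝕜 := ℝ) (hHt.posSemidef.sqrt) (p' - ptilde)‖
      ≤ ε₀ * ‖Matrix.toEuclideanCLM (𝕜 := ℝ) (hHt.posSemidef.sqrt) ptilde‖) :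
    ‖Matrix.toEuclideanCLM (𝕜 := ℝ) (hH.posSemidef.sqrt) (p' - ptilde)‖
      ≤ (ε₀ / (1 - η)) * ‖Matrix.toEuclideanCLM (𝕜 := ℝ) (hH.posSemidef.sqrt) pstar‖ := by
  have h1η : 0 < 1 - η := sub_pos.mpr hη.2
  set A := toEuclideanCLM (𝕜 := ℝ) hH.posSemidef.sqrt
  set B := toEuclideanCLM (𝕜 := ℝ) hHt.posSemidef.sqrt
  have hcmp :=
    hH.posSemidef.mul_norm_toEuclideanCLM_sqrt_sq_le hHt.posSemidef hlower (p' - ptilde)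
  have hsame : toEuclideanCLM (𝕜 := ℝ) Htilde ptilde = toEuclideanCLM (𝕜 := ℝ) H pstar := by
    rw [hptilde, hpstar, toEuclideanCLM_apply_inv_apply hHt.det_pos.ne'.isUnit,
      toEuclideanCLM_apply_inv_apply hH.det_pos.ne'.isUnit]
  have hkey :=
    hH.posSemidef.mul_norm_toEuclideanCLM_sqrt_sq_le_of_apply_eq hHt.posSemidef hlower hsame
  rw [div_mul_eq_mul_div, le_div_iff₀ h1η, mul_comm,
    ← pow_le_pow_iff_left₀ (by positivity) (mul_nonneg hε₀.1.le (norm_nonneg _)) two_ne_zero]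
  calc ((1 - η) * ‖A (p' - ptilde)‖) ^ 2 = (1 - η) * ((1 - η) * ‖A (p' - ptilde)‖ ^ 2) := by ring
    _ ≤ (1 - η) * ‖B (p' - ptilde)‖ ^ 2 := by gcongr
    _ ≤ (1 - η) * (ε₀ * ‖B ptilde‖) ^ 2 := by gcongr
    _ = ε₀ ^ 2 * ((1 - η) * ‖B ptilde‖ ^ 2) := by ring
    _ ≤ ε₀ ^ 2 * ‖A pstar‖ ^ 2 := by gcongr
    _ = (ε₀ * ‖A pstar‖) ^ 2 := by ring
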